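/- Let Z ⊂ ℙ^n be the set of C(δ+n, n) points obtained as the n-fold intersection points of δ+n general hyperplanes H_1, …, H_{δ+n} (δ ≥ 1). Then there is no nonzero homogeneous polynomial of degree d ≤ δ vanishing on all of Z, i.e., H^0(I_Z(d)) = 0 for d ≤ δ. -/

import Mathlib

open MvPolynomial

/-- The linear form with coefficient vector `c`, as a polynomial. -/
noncomputable def linForm {n : ℕ} (c : Fin n → ℂ) : MvPolynomial (Fin n) ℂ :=
  ∑ i, MvPolynomial.C (c i) * MvPolynomial.X i

/-!
Induction on `d`, and for fixed `d` on `n`, where only `d + n` hyperplanes are needed. Fix one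
hyperplane `H = ker φ`. The points of `Z` on `H` are the intersection points of the traces on `H`
of the other hyperplanes, which are again in general position in `H`; by induction on `n` the form
vanishes on `H`, hence equals `φ * g` with `g` of degree `d - 1`. At the points of `Z` cut out by
the other hyperplanes alone `φ` does not vanish (else `n + 1` independent forms would vanish at a
nonzero vector), so `g` vanishes there and `g = 0` by induction on `d`.

Polynomials are replaced by homogeneous polynomial functions on an abstract vector space (sums of
products of `d` linear forms): restricting to a hyperplane is then composition with its inclusion,
and no coordinates on it have to be chosen.
-/

open Module Submodule

section HomogeneousFunctions

variable {K V W : Type*} [Field K] [AddCommGroup V] [Module K V] [AddCommGroup W] [Module K W]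

variable (K V) in
def homogeneousFunctions (d : ℕ) : Submodule K (V → K) :=
  LinearMap.range (LinearMap.ltoFun K V K K : Dual K V →ₗ[K] V → K) ^ d

theorem comp_mem_homogeneousFunctions {d : ℕ} {f : W → K} (hf : f ∈ homogeneousFunctions K W d)
    (L : V →ₗ[K] W) : f ∘ L ∈ homogeneousFunctions K V d := by
  let precomp : (W → K) →ₐ[K] V → K := AlgHom.pi fun v ↦ Pi.evalAlgHom K (fun _ ↦ K) (L v)
  have hlin : map precomp.toLinearMap (LinearMap.range (LinearMap.ltoFun K W K K)) ≤
      LinearMap.range (LinearMap.ltoFun K V K K) := by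
    rintro _ ⟨_, ⟨φ, rfl⟩, rfl⟩
    exact ⟨φ ∘ₗ L, rfl⟩
  have := mem_map_of_mem (f := precomp.toLinearMap) hf
  rw [homogeneousFunctions, Submodule.map_pow] at this
  exact pow_le_pow_left' hlin d this

theorem dual_mul_mem_homogeneousFunctions_succ (φ : Dual K V) {d : ℕ} {g : V → K}
    (hg : g ∈ homogeneousFunctions K V d) : ⇑φ * g ∈ homogeneousFunctions K V (d + 1) := by
  rw [homogeneousFunctions, pow_succ']
  exact mul_mem_mul ⟨φ, rfl⟩ hg

theorem apply_zero_of_mem_homogeneousFunctions_succ {d : ℕ} {f : V → K}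
    (hf : f ∈ homogeneousFunctions K V (d + 1)) : f 0 = 0 := by
  have hle : homogeneousFunctions K V (d + 1) ≤
      LinearMap.ker (LinearMap.proj (R := K) (φ := fun _ : V ↦ K) 0) := by
    rw [homogeneousFunctions, pow_succ, mul_le]
    rintro g - _ ⟨φ, rfl⟩
    simp
  simpa using hle hf

theorem eq_zero_of_mem_homogeneousFunctions_zero {f : V → K}
    (hf : f ∈ homogeneousFunctions K V 0) {x : V} (hx : f x = 0) : f = 0 := by
  rw [homogeneousFunctions, pow_zero, mem_one] at hf
  obtain ⟨c, rfl⟩ := hf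
  funext y
  exact hx

-- Every linear form satisfies `ψ ∘ π = ψ - ψ v • φ`, so each factor of `f` changes by a
-- multiple of `φ` under composition with `π`.
theorem sub_comp_mem_span_singleton_mul {φ : Dual K V} {v : V} {π : V →ₗ[K] V}
    (hπ : ∀ x, π x = x - φ x • v) (d : ℕ) {f : V → K}
    (hf : f ∈ homogeneousFunctions K V (d + 1)) :
    f - f ∘ π ∈ span K {⇑φ} * homogeneousFunctions K V d := by
  have hψ (ψ : Dual K V) (F : V → K) : ⇑ψ * F - (⇑ψ * F) ∘ π =
      ⇑ψ * (F - F ∘ π) + ⇑φ * (ψ v • F ∘ π) := by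
    funext x
    simp only [Pi.sub_apply, Pi.add_apply, Pi.mul_apply, Pi.smul_apply, Function.comp_apply, hπ,
      map_sub, map_smul, smul_eq_mul]
    ring
  induction d generalizing f with
  | zero =>
    rw [homogeneousFunctions, pow_one] at hf
    obtain ⟨ψ, rfl⟩ := hf
    refine mem_span_singleton_mul.mpr ⟨algebraMap K _ (ψ v), mem_one.mpr ⟨_, rfl⟩, ?_⟩
    funext x
    simp [hπ]
  | succ d ih =>
    rw [homogeneousFunctions, pow_succ'] at hf
    induction hf using Submodule.mul_induction_on' with
    | mem_mul_mem ψ hψ' F hF =>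
      obtain ⟨ψ, rfl⟩ := hψ'
      obtain ⟨g, hg, hFg⟩ := mem_span_singleton_mul.mp (ih hF)
      rw [LinearMap.ltoFun_apply, hψ, ← hFg, mul_left_comm, ← mul_add]
      refine mem_span_singleton_mul.mpr ⟨_, add_mem ?_ ?_, rfl⟩
      · exact dual_mul_mem_homogeneousFunctions_succ ψ hg
      · exact smul_mem _ _ (comp_mem_homogeneousFunctions hF π)
    | add f₁ _ f₂ _ h₁ h₂ =>
      convert add_mem h₁ h₂ using 1
      funext x
      simp only [Pi.sub_apply, Pi.add_apply, Function.comp_apply]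
      ring

theorem exists_eq_dual_mul_of_forall_ker {φ : Dual K V} (hφ : φ ≠ 0) {d : ℕ} {f : V → K}
    (hf : f ∈ homogeneousFunctions K V (d + 1)) (hker : ∀ x, φ x = 0 → f x = 0) :
    ∃ g ∈ homogeneousFunctions K V d, f = ⇑φ * g := by
  obtain ⟨v, hv⟩ := LinearMap.range_eq_top.mp (Dual.range_eq_top_of_ne_zero hφ) 1
  let π : V →ₗ[K] V := LinearMap.id - LinearMap.smulRight φ v
  have hπ (x : V) : π x = x - φ x • v := rfl
  have hfπ : f ∘ π = 0 := funext fun x ↦ hker _ (by simp [hπ, hv])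
  obtain ⟨g, hg, hfg⟩ := mem_span_singleton_mul.mp <| by
    simpa [hfπ] using sub_comp_mem_span_singleton_mul hπ d hf
  exact ⟨g, hg, hfg.symm⟩

end HomogeneousFunctions

section Dimension

variable {K V ι : Type*} [Field K] [AddCommGroup V] [Module K V]

theorem linearIndepOn_dualRestrict_ker {h : ι → Dual K V} {T : Finset ι} {a : ι} (ha : a ∉ T)
    (hT : LinearIndepOn K h (insert a T)) :
    LinearIndepOn K (fun i ↦ (LinearMap.ker (h a)).dualRestrict (h i)) T := by
  rw [linearIndepOn_insert (by simpa using ha)] at hT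
  refine hT.1.map (f := (LinearMap.ker (h a)).dualRestrict) ?_
  have hker : LinearMap.ker (LinearMap.ker (h a)).dualRestrict ≤ span K {h a} := by
    intro ψ hψ
    have := mem_span_of_iInf_ker_le_ker (L := fun _ : Unit ↦ h a) (K := ψ) fun w hw ↦ by
      simp_all [Submodule.dualRestrict_ker_eq_dualAnnihilator]
    simpa using this
  refine Disjoint.mono_right hker (disjoint_span_singleton.mpr fun hmem ↦ absurd ?_ hT.2)
  rwa [Set.image_eq_range]

variable [FiniteDimensional K V]

theorem exists_ne_zero_forall_apply_eq_zero (h : ι → Dual K V) {L : Finset ι}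
    (hL : L.card < finrank K V) : ∃ x ≠ 0, ∀ i ∈ L, h i x = 0 := by
  have hker : LinearMap.ker (LinearMap.pi fun i : L ↦ h i) ≠ ⊥ :=
    LinearMap.ker_ne_bot_of_finrank_lt (by simpa using hL)
  obtain ⟨x, hx, hx0⟩ := (Submodule.ne_bot_iff _).mp hker
  exact ⟨x, hx0, fun i hi ↦ congrFun (LinearMap.mem_ker.mp hx) ⟨i, hi⟩⟩

theorem eq_zero_of_linearIndepOn_of_apply_eq_zero {h : ι → Dual K V} {T : Finset ι}
    (hT : LinearIndepOn K h T) (hcard : T.card = finrank K V) {x : V}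
    (hx : ∀ i ∈ T, h i x = 0) : x = 0 := by
  have hspan : span K (Set.range fun i : T ↦ h i) = ⊤ :=
    LinearIndependent.span_eq_top_of_card_eq_finrank' hT (by simpa using hcard)
  refine (forall_dual_apply_eq_zero_iff K x).mp fun φ ↦ ?_
  have hle : span K (Set.range fun i : T ↦ h i) ≤ LinearMap.ker (Dual.eval K V x) :=
    span_le.mpr <| by rintro _ ⟨i, rfl⟩; exact hx i i.2
  exact hle (by rw [hspan]; exact mem_top)

end Dimension

section Arrangement

variable {K V ι : Type*} [Field K] [AddCommGroup V] [Module K V]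

def InGeneralPosition (h : ι → Dual K V) (s : Finset ι) : Prop :=
  ∀ T ⊆ s, T.card = finrank K V → LinearIndepOn K h T

-- Nonzero representatives of the points of `ℙ(V)` on `n` of the hyperplanes `ker (h i)`, `i ∈ s`;
-- for `finrank K V = n + 1` these are the points `y_L` of `Z`.
def intersectionPoints (h : ι → Dual K V) (s : Finset ι) (n : ℕ) : Set V :=
  {x | x ≠ 0 ∧ ∃ L ⊆ s, L.card = n ∧ ∀ i ∈ L, h i x = 0}

variable {h : ι → Dual K V} {s : Finset ι}

theorem InGeneralPosition.mono (hgen : InGeneralPosition h s) {s' : Finset ι} (hs' : s' ⊆ s) :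
    InGeneralPosition h s' :=
  fun T hT ↦ hgen T (hT.trans hs')

theorem intersectionPoints_mono {s' : Finset ι} (hs' : s' ⊆ s) (n : ℕ) :
    intersectionPoints h s' n ⊆ intersectionPoints h s n := by
  rintro x ⟨hx, L, hL, hcard, hzero⟩
  exact ⟨hx, L, hL.trans hs', hcard, hzero⟩

theorem InGeneralPosition.apply_ne_zero (hgen : InGeneralPosition h s) {a : ι} (ha : a ∈ s)
    (hpos : 0 < finrank K V) (hs : finrank K V ≤ s.card) : h a ≠ 0 := by
  obtain ⟨T, haT, hTs, hT⟩ :=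
    Finset.exists_subsuperset_card_eq (Finset.singleton_subset_iff.mpr ha)
      (by rw [Finset.card_singleton]; exact hpos) hs
  exact (hgen T hTs hT).ne_zero (haT (Finset.mem_singleton_self a))

variable [DecidableEq ι]

theorem InGeneralPosition.dualRestrict_ker [FiniteDimensional K V] (hgen : InGeneralPosition h s)
    {a : ι} (ha : a ∈ s) (hha : h a ≠ 0) :
    InGeneralPosition (fun i ↦ (LinearMap.ker (h a)).dualRestrict (h i)) (s.erase a) := by
  intro T hTs hT
  have haT : a ∉ T := fun haT ↦ Finset.notMem_erase a s (hTs haT)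
  refine linearIndepOn_dualRestrict_ker haT ?_
  have hcard : (insert a T).card = finrank K V := by
    rw [Finset.card_insert_of_notMem haT, hT, Dual.finrank_ker_add_one_of_ne_zero hha]
  simpa using hgen _ (Finset.insert_subset ha (hTs.trans (s.erase_subset a))) hcard

theorem coe_mem_intersectionPoints {a : ι} (ha : a ∈ s) {n : ℕ} {x : LinearMap.ker (h a)}
    (hx : x ∈ intersectionPoints (fun i ↦ (LinearMap.ker (h a)).dualRestrict (h i)) (s.erase a) n) :
    (x : V) ∈ intersectionPoints h s (n + 1) := by
  obtain ⟨hx0, L, hLs, hL, hLx⟩ := hx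
  have haL : a ∉ L := fun haL ↦ Finset.notMem_erase a s (hLs haL)
  refine ⟨by simpa using hx0, insert a L, Finset.insert_subset ha (hLs.trans (s.erase_subset a)),
    by rw [Finset.card_insert_of_notMem haL, hL], ?_⟩
  simp only [Finset.mem_insert, forall_eq_or_imp]
  exact ⟨x.2, hLx⟩

theorem InGeneralPosition.apply_ne_zero_of_mem_intersectionPoints_erase
    (hgen : InGeneralPosition h s) {n : ℕ} (hV : finrank K V = n + 1) {a : ι} (ha : a ∈ s) {x : V}
    (hx : x ∈ intersectionPoints h (s.erase a) n) : h a x ≠ 0 := by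
  obtain ⟨hx0, L, hLs, hL, hLx⟩ := hx
  have haL : a ∉ L := fun haL ↦ Finset.notMem_erase a s (hLs haL)
  have : FiniteDimensional K V := .of_finrank_pos (by omega)
  have hcard : (insert a L).card = finrank K V := by rw [Finset.card_insert_of_notMem haL, hL, hV]
  intro hax
  refine hx0 (eq_zero_of_linearIndepOn_of_apply_eq_zero
    (hgen _ (Finset.insert_subset ha (hLs.trans (s.erase_subset a))) hcard) hcard ?_)
  simp only [Finset.mem_insert, forall_eq_or_imp]
  exact ⟨hax, hLx⟩

end Arrangement

section Main

variable {K V ι : Type*} [Field K] [AddCommGroup V] [Module K V]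

theorem eq_zero_of_forall_mem_intersectionPoints {d n : ℕ} (hV : finrank K V = n + 1)
    {h : ι → Dual K V} {s : Finset ι} (hgen : InGeneralPosition h s) (hs : d + n ≤ s.card)
    {f : V → K} (hf : f ∈ homogeneousFunctions K V d)
    (hZ : ∀ x ∈ intersectionPoints h s n, f x = 0) : f = 0 := by
  classical
  induction d generalizing n V s f with
  | zero =>
    have : FiniteDimensional K V := .of_finrank_pos (by omega)
    obtain ⟨L, hLs, hL⟩ := Finset.exists_subset_card_eq (show n ≤ s.card by omega)
    obtain ⟨x, hx0, hx⟩ := exists_ne_zero_forall_apply_eq_zero h (L := L) (by omega)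
    exact eq_zero_of_mem_homogeneousFunctions_zero hf (hZ x ⟨hx0, L, hLs, hL, hx⟩)
  | succ d ihd =>
    induction n generalizing V s f with
    | zero =>
      funext x
      by_cases hx : x = 0
      · subst hx
        exact apply_zero_of_mem_homogeneousFunctions_succ hf
      · exact hZ x ⟨hx, ∅, by simp, rfl, by simp⟩
    | succ m ihn =>
      have : FiniteDimensional K V := .of_finrank_pos (by omega)
      obtain ⟨a, ha⟩ : s.Nonempty := by rw [← Finset.card_pos]; omega
      have hha : h a ≠ 0 := hgen.apply_ne_zero ha (by omega) (by omega)
      have hker : ∀ x, h a x = 0 → f x = 0 := by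
        have hK := Dual.finrank_ker_add_one_of_ne_zero hha
        have := ihn (V := LinearMap.ker (h a)) (by omega) (hgen.dualRestrict_ker ha hha)
          (by rw [Finset.card_erase_of_mem ha]; omega)
          (comp_mem_homogeneousFunctions hf (LinearMap.ker (h a)).subtype)
          (fun x hx ↦ hZ _ (coe_mem_intersectionPoints ha hx))
        exact fun x hx ↦ congrFun this ⟨x, hx⟩
      obtain ⟨g, hg, rfl⟩ := exists_eq_dual_mul_of_forall_ker hha hf hker
      have hg0 : g = 0 := by
        refine ihd hV (hgen.mono (s.erase_subset a)) (by rw [Finset.card_erase_of_mem ha]; omega)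
          hg fun x hx ↦ ?_
        have := hZ x (intersectionPoints_mono (s.erase_subset a) _ hx)
        simpa [hgen.apply_ne_zero_of_mem_intersectionPoints_erase hV ha hx] using this
      simp [hg0]

end Main

theorem eval_linForm {n : ℕ} (c x : Fin n → ℂ) : eval x (linForm c) = c ⬝ᵥ x := by
  simp [linForm, dotProduct]

theorem eval_mem_homogeneousFunctions {K σ : Type*} [Field K] {d : ℕ} {P : MvPolynomial σ K}
    (hP : P.IsHomogeneous d) : (fun x ↦ eval x P) ∈ homogeneousFunctions K (σ → K) d := by
  let E : MvPolynomial σ K →ₐ[K] (σ → K) → K := aeval fun j x ↦ x j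
  have hE (Q : MvPolynomial σ K) : E Q = fun x ↦ eval x Q := by
    funext x
    induction Q using MvPolynomial.induction_on <;> simp_all [E]
  have hX : map E.toLinearMap (homogeneousSubmodule σ K 1) ≤
      LinearMap.range (LinearMap.ltoFun K (σ → K) K K) := by
    rw [homogeneousSubmodule_one_eq_span_X, map_span, span_le]
    rintro _ ⟨_, ⟨j, rfl⟩, rfl⟩
    exact ⟨LinearMap.proj j, by simp [E]⟩
  have := mem_map_of_mem (f := E.toLinearMap)
    (show P ∈ homogeneousSubmodule σ K 1 ^ d by simpa using hP)
  rw [Submodule.map_pow] at this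
  rw [← hE]
  exact pow_le_pow_left' hX d this

theorem no_low_degree_through_points_general (n δ d : ℕ) (hd : d ≤ δ)
    (h : Fin (δ + n) → (Fin (n + 1) → ℂ))
    (hgen : ∀ T : Finset (Fin (δ + n)), T.card = n + 1 →
      LinearIndependent ℂ (fun i : T => h i))
    (P : MvPolynomial (Fin (n + 1)) ℂ)
    (hP : P ∈ MvPolynomial.homogeneousSubmodule (Fin (n + 1)) ℂ d)
    (hvan : ∀ x : Fin (n + 1) → ℂ, x ≠ 0 →
      (∃ L : Finset (Fin (δ + n)), L.card = n ∧
        ∀ i ∈ L, MvPolynomial.eval x (linForm (h i)) = 0) →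
      MvPolynomial.eval x P = 0) :
    P = 0 := by
  let φ : Fin (δ + n) → Dual ℂ (Fin (n + 1) → ℂ) := fun i ↦ dotProductEquiv ℂ _ (h i)
  have hφ : InGeneralPosition φ Finset.univ := fun T _ hT ↦
    (hgen T (by simpa using hT)).map' _ (dotProductEquiv ℂ _).ker
  have hf := eq_zero_of_forall_mem_intersectionPoints (by simp) hφ (by simpa using hd)
    (eval_mem_homogeneousFunctions hP) fun x ⟨hx, L, _, hL, hLx⟩ ↦
      hvan x hx ⟨L, hL, fun i hi ↦ by simpa [φ, eval_linForm] using hLx i hi⟩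
  exact MvPolynomial.funext fun x ↦ congrFun hf x

/-- Let `Z ⊂ ℙ^n` be the set of `C(δ+n, n)` points obtained as the `n`-fold intersection
points of `δ+n` general hyperplanes (with equations `h_1, …, h_{δ+n}`, any `n+1` of them
linearly independent), `δ ≥ 1`.  Then there is no nonzero homogeneous polynomial of degree
`d ≤ δ` vanishing on all of `Z`, i.e. `H^0(I_Z(d)) = 0` for `d ≤ δ`. -/
theorem no_low_degree_through_points (n δ d : ℕ) (hδ : 1 ≤ δ) (hd : d ≤ δ)
    (h : Fin (δ + n) → (Fin (n + 1) → ℂ))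
    (hgen : ∀ T : Finset (Fin (δ + n)), T.card = n + 1 →
      LinearIndependent ℂ (fun i : T => h i))
    (P : MvPolynomial (Fin (n + 1)) ℂ)
    (hP : P ∈ MvPolynomial.homogeneousSubmodule (Fin (n + 1)) ℂ d)
    (hvan : ∀ x : Fin (n + 1) → ℂ, x ≠ 0 →
      (∃ L : Finset (Fin (δ + n)), L.card = n ∧
        ∀ i ∈ L, MvPolynomial.eval x (linForm (h i)) = 0) →
      MvPolynomial.eval x P = 0) :
    P = 0 :=
  no_low_degree_through_points_general n δ d hd h hgen P hP hvan
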